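/- arXiv:1612.03377 — 4 statements merged into one kernel-verified Lean document; each statement's English description precedes it below -/
import Mathlib

section
/- Let G : ℝ → ℝ be continuous, strictly increasing, satisfying G(x+2) = G(x)+2 for all x, G(x) ≥ x for all x, and G(x) = x if and only if x ∈ ℤ. Let g : ℝ/2ℤ → ℝ/2ℤ be the induced circle map g(π(x)) = π(G(x)). Then g is chain transitive: for every ε > 0 and every pair of points a, b ∈ ℝ/2ℤ there is an ε-chain from a to b. -/
/-!
Work on the lift `G` and push ε-chains down along the 1-Lipschitz projection `ℝ → ℝ/2ℤ`.
Each forward orbit of `G` increases to the next integer `⌈x⌉`, and each backward orbit of a point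
of `(q, q + 1)` decreases to `q`. Hence an ε-chain from `x` to `⌈x⌉` follows the forward orbit,
and an ε-chain from `q` to `y ∈ (q, q + 1)` jumps onto a far backward iterate of `y` and then
follows its orbit. Concatenating, `x` reaches every point above `⌈x⌉`, and on the circle every
point has such a lift.
-/

open Filter Topology

/-- An ε-chain based notion: `f` is chain transitive if for every `ε > 0` and every
pair of points `a, b` there is a finite ε-chain `x₀ = a, …, x_n = b` (with `n ≥ 1`)
such that `dist (f (x_i)) (x_{i+1}) < ε` for all `0 ≤ i ≤ n - 1`. -/
def ChainTransitive {X : Type*} [MetricSpace X] (f : X → X) : Prop :=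
  ∀ ε > (0 : ℝ), ∀ a b : X, ∃ n ≥ 1, ∃ c : ℕ → X,
    c 0 = a ∧ c n = b ∧ ∀ i < n, dist (f (c i)) (c (i + 1)) < ε

open Function Set

lemma Function.isFixedPt_of_backwardOrbit_tendsto {X : Type*} [TopologicalSpace X] [T2Space X]
    {f : X → X} {z : ℕ → X} {y : X} (hz : ∀ k, f (z (k + 1)) = z k)
    (hlim : Tendsto z atTop (𝓝 y)) (hf : ContinuousAt f y) : IsFixedPt f y := by
  refine tendsto_nhds_unique ?_ hlim
  simpa only [comp_def, hz] using hf.tendsto.comp ((tendsto_add_atTop_iff_nat 1).2 hlim)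

section Chains

variable {X Y : Type*} [PseudoMetricSpace X] [PseudoMetricSpace Y] {f : X → X} {ε : ℝ}

def HasChain (f : X → X) (ε : ℝ) (a b : X) : Prop :=
  ∃ n ≥ 1, ∃ c : ℕ → X, c 0 = a ∧ c n = b ∧ ∀ i < n, dist (f (c i)) (c (i + 1)) < ε

lemma HasChain.of_dist_lt {a b : X} (h : dist (f a) b < ε) : HasChain f ε a b :=
  ⟨1, le_rfl, fun i => if i = 0 then a else b, rfl, rfl, fun i hi => by
    obtain rfl : i = 0 := by omega
    simpa using h⟩

lemma HasChain.trans {a b c : X} (hab : HasChain f ε a b) (hbc : HasChain f ε b c) :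
    HasChain f ε a c := by
  obtain ⟨n, hn, u, rfl, rfl, hu⟩ := hab
  obtain ⟨m, hm, v, hv0, rfl, hv⟩ := hbc
  refine ⟨n + m, by omega, fun i => if i ≤ n then u i else v (i - n), by simp, ?_, ?_⟩
  · simp [show ¬ n + m ≤ n by omega]
  · intro i hi
    rcases lt_or_ge i n with hin | hni
    · simpa [hin.le, Nat.succ_le_of_lt hin] using hu i hin
    · have hv' := hv (i - n) (by omega)
      rw [show i - n + 1 = i + 1 - n by omega] at hv'
      obtain rfl | hni := hni.eq_or_lt
      · simpa [hv0] using hv'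
      · simpa [hni.not_ge, show ¬ i + 1 ≤ n by omega] using hv'

lemma HasChain.map {g : Y → Y} {φ : X → Y} (hφ : LipschitzWith 1 φ) (hfg : Semiconj φ f g)
    {a b : X} (h : HasChain f ε a b) : HasChain g ε (φ a) (φ b) := by
  obtain ⟨n, hn, c, rfl, rfl, hc⟩ := h
  refine ⟨n, hn, φ ∘ c, rfl, rfl, fun i hi => ?_⟩
  calc dist (g (φ (c i))) (φ (c (i + 1))) = dist (φ (f (c i))) (φ (c (i + 1))) := by
        rw [hfg.eq]
    _ ≤ dist (f (c i)) (c (i + 1)) := by simpa using hφ.dist_le_mul (f (c i)) (c (i + 1))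
    _ < ε := hc i hi

lemma HasChain.of_dist_iterate_lt (hε : 0 < ε) {a b : X} (n : ℕ)
    (h : dist (f^[n + 1] a) b < ε) : HasChain f ε a b := by
  induction n generalizing a with
  | zero => exact .of_dist_lt h
  | succ n ih =>
    exact (HasChain.of_dist_lt (b := f a) (by simpa using hε)).trans
      (ih (by rwa [iterate_succ_apply] at h))

lemma HasChain.of_tendsto_iterate (hε : 0 < ε) {a b : X}
    (h : Tendsto (fun n => f^[n] a) atTop (𝓝 b)) : HasChain f ε a b := by
  obtain ⟨n, hn⟩ := (Metric.tendsto_atTop.mp h) ε hε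
  exact .of_dist_iterate_lt hε n (hn (n + 1) n.le_succ)

lemma HasChain.of_dist_backwardOrbit_lt (hε : 0 < ε) {p : X} {z : ℕ → X}
    (hz : ∀ k, f (z (k + 1)) = z k) (n : ℕ) (h : dist (f p) (z n) < ε) :
    HasChain f ε p (z 0) := by
  induction n generalizing z with
  | zero => exact .of_dist_lt h
  | succ n ih =>
    exact (ih (z := fun k => z (k + 1)) (fun k => hz (k + 1)) h).trans
      (.of_dist_lt (by simpa [hz 0] using hε))

lemma HasChain.of_backwardOrbit_tendsto (hε : 0 < ε) {p : X} {z : ℕ → X}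
    (hz : ∀ k, f (z (k + 1)) = z k) (h : Tendsto z atTop (𝓝 (f p))) :
    HasChain f ε p (z 0) := by
  obtain ⟨n, hn⟩ := (Metric.tendsto_atTop.mp h) ε hε
  exact .of_dist_backwardOrbit_lt hε hz n (by rw [dist_comm]; exact hn n le_rfl)

end Chains

structure MovesUpBetweenIntegers (G : ℝ → ℝ) : Prop where
  continuous : Continuous G
  monotone : Monotone G
  le_apply : ∀ x, x ≤ G x
  apply_eq_self_iff : ∀ x, G x = x ↔ ∃ k : ℤ, x = k

namespace MovesUpBetweenIntegers

variable {G : ℝ → ℝ} {ε : ℝ}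

lemma apply_intCast (hG : MovesUpBetweenIntegers G) (k : ℤ) : G k = k :=
  (hG.apply_eq_self_iff k).2 ⟨k, rfl⟩

lemma iterate_le_ceil (hG : MovesUpBetweenIntegers G) (x : ℝ) (n : ℕ) : G^[n] x ≤ ⌈x⌉ := by
  have hceil : IsFixedPt G ⌈x⌉ := hG.apply_intCast ⌈x⌉
  simpa only [(hceil.iterate n).eq] using hG.monotone.iterate n (Int.le_ceil x)

lemma tendsto_iterate_ceil (hG : MovesUpBetweenIntegers G) (x : ℝ) :
    Tendsto (fun n => G^[n] x) atTop (𝓝 ⌈x⌉) := by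
  have hmono : Monotone fun n => G^[n] x :=
    fun m n hmn => monotone_iterate_of_id_le hG.le_apply hmn x
  have hbdd : BddAbove (range fun n => G^[n] x) :=
    ⟨⌈x⌉, by rintro _ ⟨n, rfl⟩; exact hG.iterate_le_ceil x n⟩
  have hlim := tendsto_atTop_ciSup hmono hbdd
  obtain ⟨k, hk⟩ := (hG.apply_eq_self_iff _).1
    (isFixedPt_of_tendsto_iterate hlim hG.continuous.continuousAt)
  have hxk : x ≤ k := hk ▸ (le_ciSup hbdd 0 : G^[0] x ≤ _)
  have hkx : (k : ℝ) ≤ ⌈x⌉ := hk ▸ ciSup_le (hG.iterate_le_ceil x)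
  obtain rfl : k = ⌈x⌉ := le_antisymm (mod_cast hkx) (Int.ceil_le.2 hxk)
  rwa [← hk]

lemma surjective (hG : MovesUpBetweenIntegers G) : Surjective G :=
  hG.continuous.surjective (tendsto_atTop_mono hG.le_apply tendsto_id)
    (tendsto_atBot_mono (fun x => (hG.iterate_le_ceil x 1).trans (Int.ceil_lt_add_one x).le)
      (tendsto_atBot_add_const_right _ 1 tendsto_id))

lemma exists_backwardOrbit_tendsto (hG : MovesUpBetweenIntegers G) {q : ℤ} {y : ℝ}
    (hy : y ∈ Ioo (q : ℝ) (q + 1)) :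
    ∃ z : ℕ → ℝ, z 0 = y ∧ (∀ k, G (z (k + 1)) = z k) ∧ Tendsto z atTop (𝓝 q) := by
  set H := invFun G
  have hGH : ∀ y, G (H y) = y := fun y => invFun_eq (hG.surjective y)
  have hz : ∀ k, G (H^[k + 1] y) = H^[k] y := fun k => by simp only [iterate_succ_apply', hGH]
  refine ⟨fun k => H^[k] y, rfl, hz, ?_⟩
  have hanti : Antitone fun k => H^[k] y :=
    antitone_nat_of_succ_le fun k => (hz k).symm ▸ hG.le_apply _
  have hq : ∀ k, (q : ℝ) < H^[k] y := by
    intro k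
    induction k with
    | zero => exact hy.1
    | succ k ih =>
      by_contra! hle
      have := hG.monotone hle
      rw [hz, hG.apply_intCast] at this
      linarith
  have hbdd : BddBelow (range fun k => H^[k] y) := ⟨q, by rintro _ ⟨k, rfl⟩; exact (hq k).le⟩
  have hlim := tendsto_atTop_ciInf hanti hbdd
  obtain ⟨k, hk⟩ := (hG.apply_eq_self_iff _).1
    (isFixedPt_of_backwardOrbit_tendsto hz hlim hG.continuous.continuousAt)
  have hqk : (q : ℝ) ≤ k := hk ▸ le_ciInf fun k => (hq k).le
  have hky : (k : ℝ) < q + 1 := hk ▸ (ciInf_le hbdd 0).trans_lt hy.2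
  obtain rfl : k = q := by
    have : q ≤ k := mod_cast hqk
    have : k < q + 1 := mod_cast hky
    omega
  rwa [← hk]

lemma hasChain_ceil (hG : MovesUpBetweenIntegers G) (hε : 0 < ε) (x : ℝ) :
    HasChain G ε x ⌈x⌉ :=
  .of_tendsto_iterate hε (hG.tendsto_iterate_ceil x)

lemma hasChain_intCast_of_mem_Ioo (hG : MovesUpBetweenIntegers G) (hε : 0 < ε) {q : ℤ}
    {y : ℝ} (hy : y ∈ Ioo (q : ℝ) (q + 1)) : HasChain G ε q y := by
  obtain ⟨z, rfl, hz, hlim⟩ := hG.exists_backwardOrbit_tendsto hy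
  exact .of_backwardOrbit_tendsto hε hz (by rwa [hG.apply_intCast])

lemma hasChain_intCast_add_one (hG : MovesUpBetweenIntegers G) (hε : 0 < ε) (q : ℤ) :
    HasChain G ε q (q + 1) := by
  have hhalf : (q : ℝ) + 1 / 2 ∈ Ioo (q : ℝ) (q + 1) := ⟨by linarith, by linarith⟩
  have hceil : ⌈(q : ℝ) + 1 / 2⌉ = q + 1 := by
    rw [Int.ceil_eq_iff]; push_cast; constructor <;> linarith
  have := (hG.hasChain_intCast_of_mem_Ioo hε hhalf).trans (hG.hasChain_ceil hε _)
  rwa [hceil, Int.cast_add, Int.cast_one] at this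

lemma hasChain_intCast_of_le (hG : MovesUpBetweenIntegers G) (hε : 0 < ε) {q p : ℤ}
    (h : q ≤ p) : HasChain G ε q p := by
  induction p, h using Int.leInduction with
  | base => exact .of_dist_lt (by simpa [hG.apply_intCast] using hε)
  | succ p _ ih => exact ih.trans (by exact_mod_cast hG.hasChain_intCast_add_one hε p)

lemma hasChain_intCast_of_lt (hG : MovesUpBetweenIntegers G) (hε : 0 < ε) {q : ℤ} {y : ℝ}
    (hy : (q : ℝ) < y) : HasChain G ε q y := by
  set p := ⌈y⌉ - 1
  have hqp : q ≤ p := by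
    have : q < ⌈y⌉ := Int.lt_ceil.2 hy
    omega
  have hpy : (p : ℝ) < y := by push_cast [p]; linarith [Int.ceil_lt_add_one y]
  have hyp : y ≤ p + 1 := by push_cast [p]; linarith [Int.le_ceil y]
  refine (hG.hasChain_intCast_of_le hε hqp).trans ?_
  rcases hyp.lt_or_eq with hyp | hyp
  · exact hG.hasChain_intCast_of_mem_Ioo hε ⟨hpy, hyp⟩
  · rw [hyp]
    exact hG.hasChain_intCast_add_one hε p

end MovesUpBetweenIntegers

lemma AddCircle.lipschitzWith_coe (p : ℝ) : LipschitzWith 1 ((↑) : ℝ → AddCircle p) :=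
  LipschitzWith.of_dist_le_mul fun x y => by
    rw [NNReal.coe_one, one_mul, dist_eq_norm, dist_eq_norm, ← AddCircle.coe_sub]
    exact QuotientAddGroup.norm_mk_le_norm

theorem stmt3_general (G : ℝ → ℝ) (hcont : Continuous G) (hmono : StrictMono G)
    (hge : ∀ x : ℝ, x ≤ G x)
    (hfix : ∀ x : ℝ, G x = x ↔ ∃ k : ℤ, x = (k : ℝ))
    (g : AddCircle (2 : ℝ) → AddCircle (2 : ℝ))
    (hg : ∀ x : ℝ, g ((x : ℝ) : AddCircle (2 : ℝ)) = ((G x : ℝ) : AddCircle (2 : ℝ))) :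
    ChainTransitive g := by
  have hG : MovesUpBetweenIntegers G := ⟨hcont, hmono.monotone, hge, hfix⟩
  have hsemi : Semiconj ((↑) : ℝ → AddCircle (2 : ℝ)) G g := fun x => (hg x).symm
  intro ε hε a b
  induction a using QuotientAddGroup.induction_on with | H α => ?_
  induction b using QuotientAddGroup.induction_on with | H β => ?_
  obtain ⟨k, hk⟩ := exists_int_gt ((⌈α⌉ - β) / 2)
  have hlift : ((β + k • (2 : ℝ) : ℝ) : AddCircle (2 : ℝ)) = β := by
    rw [AddCircle.coe_add, AddCircle.coe_zsmul, AddCircle.coe_period, smul_zero, add_zero]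
  have hβ : (⌈α⌉ : ℝ) < β + k • (2 : ℝ) := by
    rw [zsmul_eq_mul]
    linarith [(div_lt_iff₀ two_pos).1 hk]
  rw [← hlift]
  exact ((hG.hasChain_ceil hε α).trans (hG.hasChain_intCast_of_lt hε hβ)).map
    (AddCircle.lipschitzWith_coe 2) hsemi

/-- Let `G : ℝ → ℝ` be continuous, strictly increasing, with
`G (x + 2) = G x + 2`, `G x ≥ x`, and `G x = x` iff `x` is an integer. Then the
induced map `g` on the circle `ℝ/2ℤ` is chain transitive. -/
theorem stmt3 (G : ℝ → ℝ) (hcont : Continuous G) (hmono : StrictMono G)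
    (hper : ∀ x : ℝ, G (x + 2) = G x + 2)
    (hge : ∀ x : ℝ, x ≤ G x)
    (hfix : ∀ x : ℝ, G x = x ↔ ∃ k : ℤ, x = (k : ℝ))
    (g : AddCircle (2 : ℝ) → AddCircle (2 : ℝ))
    (hg : ∀ x : ℝ, g ((x : ℝ) : AddCircle (2 : ℝ)) = ((G x : ℝ) : AddCircle (2 : ℝ))) :
    ChainTransitive g :=
  stmt3_general G hcont hmono hge hfix g hg
end

section
/- Let G : ℝ → ℝ be continuous, strictly increasing, satisfying G(x+2) = G(x)+2 for all x, G(x) ≥ x for all x, and G(x) = x if and only if x ∈ ℤ. Let g : ℝ/2ℤ → ℝ/2ℤ be the induced circle map g(π(x)) = π(G(x)). Then g(π(0)) = π(0), g(π(1)) = π(1), and every point a ∈ ℝ/2ℤ with a ≠ π(0) and a ≠ π(1) is wandering: there is an open neighborhood U of a such that g^n(U) ∩ U = ∅ for all n ≥ 1. Consequently the non-wandering set of g is exactly {π(0), π(1)}. -/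
/-! Every point moves to the right under `G`, so a non-integer point `x` has a neighbourhood
`U` lying to the left of some `b < G x` whose image under `G` lies to the right of `b`; all
later iterates stay to the right of `b`, hence never return to `U`. Since `G` fixes the
integers, the orbit of `U` also stays inside the unit interval containing `x`, on which the
projection to `ℝ/2ℤ` is injective, so the picture descends to the circle. -/

open Filter Topology Function

/-- The non-wandering set of a map `f`: the set of points `x` such that every open
neighborhood `U` of `x` satisfies `f^n(U) ∩ U ≠ ∅` for some `n ≥ 1`. -/
def NonWanderingSet {X : Type*} [TopologicalSpace X] (f : X → X) : Set X :=
  {x | ∀ U : Set X, IsOpen U → x ∈ U → ∃ n ≥ 1, (f^[n] '' U ∩ U).Nonempty}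

open Set

section Wandering

variable {X Y : Type*} [TopologicalSpace X] [TopologicalSpace Y]

def IsWanderingPt (f : X → X) (x : X) : Prop :=
  ∃ U : Set X, IsOpen U ∧ x ∈ U ∧ ∀ n ≥ 1, f^[n] '' U ∩ U = ∅

lemma IsWanderingPt.notMem_nonWanderingSet {f : X → X} {x : X} (hx : IsWanderingPt f x) :
    x ∉ NonWanderingSet f := by
  obtain ⟨U, hU, hxU, hdisj⟩ := hx
  intro hmem
  obtain ⟨n, hn, hne⟩ := hmem U hU hxU
  exact hne.ne_empty (hdisj n hn)

lemma Function.IsFixedPt.mem_nonWanderingSet {f : X → X} {x : X} (hx : IsFixedPt f x) :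
    x ∈ NonWanderingSet f :=
  fun _ _ hxU => ⟨1, le_rfl, x, ⟨x, hxU, hx⟩, hxU⟩

lemma nonWanderingSet_eq_of_isFixedPt_of_isWanderingPt {f : X → X} {s : Set X}
    (hfix : ∀ x ∈ s, IsFixedPt f x) (hwand : ∀ x ∉ s, IsWanderingPt f x) :
    NonWanderingSet f = s := by
  ext x
  by_cases hx : x ∈ s
  · exact iff_of_true (hfix x hx).mem_nonWanderingSet hx
  · exact iff_of_false (hwand x hx).notMem_nonWanderingSet hx

lemma IsWanderingPt.image_of_semiconj {π : X → Y} {f : X → X} {g : Y → Y}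
    (hπ : IsOpenMap π) (hsemi : Semiconj π f g) {S : Set X} (hS : IsOpen S)
    (hfS : MapsTo f S S) (hinj : InjOn π S) {x : X} (hxS : x ∈ S)
    (hx : IsWanderingPt f x) : IsWanderingPt g (π x) := by
  obtain ⟨U, hU, hxU, hdisj⟩ := hx
  refine ⟨π '' (U ∩ S), hπ _ (hU.inter hS), mem_image_of_mem π ⟨hxU, hxS⟩, fun n hn => ?_⟩
  have hiter : f^[n] '' (U ∩ S) ⊆ S :=
    ((hfS.iterate n).mono_left inter_subset_right).image_subset
  have hdisjS : f^[n] '' (U ∩ S) ∩ (U ∩ S) = ∅ :=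
    subset_empty_iff.mp <| hdisj n hn ▸
      inter_subset_inter (image_mono inter_subset_left) inter_subset_left
  rw [← (hsemi.iterate_right n).set_image, ← hinj.image_inter hiter inter_subset_right,
    hdisjS, image_empty]

/-- Take `U = {y | y < b < f y}` for some `b ∈ (x, f x)`: orbits move right, so they stay right
of `b` after one step. -/
lemma isWanderingPt_of_lt_apply {α : Type*} [LinearOrder α] [TopologicalSpace α]
    [OrderClosedTopology α] [DenselyOrdered α] {f : α → α} (hf : Continuous f) (hle : id ≤ f)
    {x : α} (hx : x < f x) : IsWanderingPt f x := by
  obtain ⟨b, hxb, hbf⟩ := exists_between hx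
  refine ⟨Iio b ∩ f ⁻¹' Ioi b, isOpen_Iio.inter (isOpen_Ioi.preimage hf), ⟨hxb, hbf⟩,
    fun n hn => eq_empty_of_forall_notMem ?_⟩
  obtain ⟨m, rfl⟩ := Nat.exists_eq_add_of_le' hn
  rintro _ ⟨⟨y, ⟨-, hy⟩, rfl⟩, hlt, -⟩
  rw [iterate_succ_apply] at hlt
  exact (hy.trans_le (id_le_iterate_of_id_le hle m (f y))).not_gt hlt

end Wandering

namespace AddCircle

lemma isWanderingPt_coe_of_mem_Ioo {p : ℝ} [Fact (0 < p)] {G : ℝ → ℝ}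
    {g : AddCircle p → AddCircle p} (hsemi : Semiconj (↑) G g) (hcont : Continuous G)
    (hmono : StrictMono G) (hle : id ≤ G) {c d x : ℝ} (hc : G c = c) (hd : G d = d)
    (hcd : d ≤ c + p) (hx : x ∈ Ioo c d) (hGx : x < G x) :
    IsWanderingPt g (x : AddCircle p) := by
  have hmaps : MapsTo G (Ioo c d) (Ioo c d) := by
    simpa only [hc, hd] using hmono.mapsTo_Ioo (a := c) (b := d)
  have hIco : Ioo c d ⊆ Ico c (c + p) := fun y hy => ⟨hy.1.le, hy.2.trans_le hcd⟩
  have hinj : InjOn ((↑) : ℝ → AddCircle p) (Ioo c d) := fun y hy z hz h =>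
    (coe_eq_coe_iff_of_mem_Ico (hIco hy) (hIco hz)).mp h
  exact (isWanderingPt_of_lt_apply hcont hle hGx).image_of_semiconj
    QuotientAddGroup.isOpenMap_coe hsemi isOpen_Ioo hmaps hinj hx

lemma exists_eq_coe_of_ne_zero_of_ne_one {a : AddCircle (2 : ℝ)}
    (h0 : a ≠ ((0 : ℝ) : AddCircle (2 : ℝ))) (h1 : a ≠ ((1 : ℝ) : AddCircle (2 : ℝ))) :
    ∃ x : ℝ, a = x ∧ ∀ k : ℤ, x ≠ k := by
  have : Fact ((0 : ℝ) < 2) := ⟨two_pos⟩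
  obtain ⟨x, ⟨hx0, hx2⟩, rfl⟩ := eq_coe_Ico a
  refine ⟨x, rfl, ?_⟩
  rintro k rfl
  have hk0 : 0 ≤ k := by exact_mod_cast hx0
  have hk2 : k < 2 := by exact_mod_cast (by simpa using hx2 : (k : ℝ) < 2)
  interval_cases k
  · exact h0 (by simp)
  · exact h1 (by simp)

end AddCircle

theorem stmt4_general (G : ℝ → ℝ) (hcont : Continuous G) (hmono : StrictMono G)
    (hge : ∀ x : ℝ, x ≤ G x)
    (hfix : ∀ x : ℝ, G x = x ↔ ∃ k : ℤ, x = (k : ℝ))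
    (g : AddCircle (2 : ℝ) → AddCircle (2 : ℝ))
    (hg : ∀ x : ℝ, g ((x : ℝ) : AddCircle (2 : ℝ)) = ((G x : ℝ) : AddCircle (2 : ℝ))) :
    g (((0 : ℝ) : AddCircle (2 : ℝ))) = ((0 : ℝ) : AddCircle (2 : ℝ)) ∧
    g (((1 : ℝ) : AddCircle (2 : ℝ))) = ((1 : ℝ) : AddCircle (2 : ℝ)) ∧
    (∀ a : AddCircle (2 : ℝ), a ≠ ((0 : ℝ) : AddCircle (2 : ℝ)) →
      a ≠ ((1 : ℝ) : AddCircle (2 : ℝ)) →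
      ∃ U : Set (AddCircle (2 : ℝ)), IsOpen U ∧ a ∈ U ∧
        ∀ n ≥ 1, g^[n] '' U ∩ U = ∅) ∧
    NonWanderingSet g =
      {((0 : ℝ) : AddCircle (2 : ℝ)), ((1 : ℝ) : AddCircle (2 : ℝ))} := by
  have : Fact ((0 : ℝ) < 2) := ⟨two_pos⟩
  have hG : ∀ k : ℤ, G k = k := fun k => (hfix k).mpr ⟨k, rfl⟩
  have hfix0 : IsFixedPt g ((0 : ℝ) : AddCircle (2 : ℝ)) := by
    rw [IsFixedPt, hg, ← Int.cast_zero, hG]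
  have hfix1 : IsFixedPt g ((1 : ℝ) : AddCircle (2 : ℝ)) := by
    rw [IsFixedPt, hg, ← Int.cast_one, hG]
  have hwand : ∀ a : AddCircle (2 : ℝ), a ≠ ((0 : ℝ) : AddCircle (2 : ℝ)) →
      a ≠ ((1 : ℝ) : AddCircle (2 : ℝ)) → IsWanderingPt g a := by
    intro a h0 h1
    obtain ⟨x, rfl, hx⟩ := AddCircle.exists_eq_coe_of_ne_zero_of_ne_one h0 h1
    have hGx : x < G x := (hge x).lt_of_ne fun h => by
      obtain ⟨k, rfl⟩ := (hfix x).mp h.symm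
      exact hx k rfl
    have hxc : x ∈ Ioo (⌊x⌋ : ℝ) (⌊x⌋ + 1) :=
      ⟨(Int.floor_le x).lt_of_ne (hx _).symm, Int.lt_floor_add_one x⟩
    exact AddCircle.isWanderingPt_coe_of_mem_Ioo (fun y => (hg y).symm) hcont hmono hge
      (hG _) (by exact_mod_cast hG (⌊x⌋ + 1)) (by linarith) hxc hGx
  refine ⟨hfix0, hfix1, hwand, nonWanderingSet_eq_of_isFixedPt_of_isWanderingPt ?_ ?_⟩
  · rintro a (rfl | rfl)
    exacts [hfix0, hfix1]
  · intro a ha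
    simp only [mem_insert_iff, mem_singleton_iff, not_or] at ha
    exact hwand a ha.1 ha.2

/-- Let `G : ℝ → ℝ` be continuous, strictly increasing, with
`G (x + 2) = G x + 2`, `G x ≥ x`, and `G x = x` iff `x ∈ ℤ`, and let `g` be the
induced map on `ℝ/2ℤ`. Then `g` fixes `π 0` and `π 1`, every other point is
wandering, and the non-wandering set of `g` is exactly `{π 0, π 1}`. -/
theorem stmt4 (G : ℝ → ℝ) (hcont : Continuous G) (hmono : StrictMono G)
    (hper : ∀ x : ℝ, G (x + 2) = G x + 2)
    (hge : ∀ x : ℝ, x ≤ G x)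
    (hfix : ∀ x : ℝ, G x = x ↔ ∃ k : ℤ, x = (k : ℝ))
    (g : AddCircle (2 : ℝ) → AddCircle (2 : ℝ))
    (hg : ∀ x : ℝ, g ((x : ℝ) : AddCircle (2 : ℝ)) = ((G x : ℝ) : AddCircle (2 : ℝ))) :
    g (((0 : ℝ) : AddCircle (2 : ℝ))) = ((0 : ℝ) : AddCircle (2 : ℝ)) ∧
    g (((1 : ℝ) : AddCircle (2 : ℝ))) = ((1 : ℝ) : AddCircle (2 : ℝ)) ∧
    (∀ a : AddCircle (2 : ℝ), a ≠ ((0 : ℝ) : AddCircle (2 : ℝ)) →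
      a ≠ ((1 : ℝ) : AddCircle (2 : ℝ)) →
      ∃ U : Set (AddCircle (2 : ℝ)), IsOpen U ∧ a ∈ U ∧
        ∀ n ≥ 1, g^[n] '' U ∩ U = ∅) ∧
    NonWanderingSet g =
      {((0 : ℝ) : AddCircle (2 : ℝ)), ((1 : ℝ) : AddCircle (2 : ℝ))} :=
  stmt4_general G hcont hmono hge hfix g hg
end

section
/- Let X be a nonempty topological space, g : X → X a bijection, and for each x ∈ X let H_x : ℝ → ℝ be continuous, strictly increasing, with H_x(t+2) = H_x(t)+2 for all t, inducing a circle homeomorphism h_x of ℝ/2ℤ; define f : X × (ℝ/2ℤ) → X × (ℝ/2ℤ) by f(x, a) = (g(x), h_x(a)). Fix 0 < δ < 1/2, and suppose Λ₀ ⊆ X × π([−δ, 0]) and Λ₁ ⊆ X × π([1−δ, 1]) are closed sets with f(Λ₀) = Λ₀, f(Λ₁) = Λ₁, and such that for every x ∈ X and each i ∈ {0,1} the fiber intersection Λ_i ∩ ({x} × ℝ/2ℤ) is nonempty. Then, setting U = X × π((−1, −δ)) and V = X × π((0, 1−δ)), one has f^n(U) ∩ V = ∅ for all n ≥ 0. In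 particular f is not transitive. -/
/-!
In each fiber, `U` lies on the open arc running counterclockwise from a point of `Λ₁` to a point
of `Λ₀`, while `V` lies on the complementary side. A fiberwise orientation-preserving map carries
such an arc onto the arc between the images of its endpoints, and these images stay in `Λ₁` and
`Λ₀`. Hence the set of points lying on such arcs is forward invariant, contains `U` and misses `V`.
-/

open Set

lemma AddCircle.exists_int_eq_add_mul_of_coe_eq {T a b : ℝ}
    (h : (a : AddCircle T) = b) : ∃ k : ℤ, b = a + k * T := by
  have hba : ((b - a : ℝ) : AddCircle T) = 0 := by rw [AddCircle.coe_sub, h, sub_self]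
  rw [AddCircle.coe_eq_zero_iff] at hba
  obtain ⟨k, hk⟩ := hba
  exact ⟨k, by rw [zsmul_eq_mul] at hk; linarith⟩

section FiberwiseArc

variable {X : Type*} {T : ℝ}

/-- The points lying, in their fiber, on an open arc running counterclockwise from a point of `A`
to a point of `B`. -/
def fiberwiseArc (A B : Set (X × AddCircle T)) : Set (X × AddCircle T) :=
  {p | ∃ s t u : ℝ, (p.1, (s : AddCircle T)) ∈ A ∧ (p.1, (u : AddCircle T)) ∈ B ∧
    s < t ∧ t < u ∧ u < s + T ∧ p.2 = t}

lemma mapsTo_fiberwiseArc {A B : Set (X × AddCircle T)} {f : X × AddCircle T → X × AddCircle T}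
    {g : X → X} {H : X → ℝ → ℝ}
    (hf : ∀ x (t : ℝ), f (x, (t : AddCircle T)) = (g x, (H x t : AddCircle T)))
    (hmono : ∀ x, StrictMono (H x)) (hper : ∀ x t, H x (t + T) = H x t + T)
    (hA : MapsTo f A A) (hB : MapsTo f B B) :
    MapsTo f (fiberwiseArc A B) (fiberwiseArc A B) := by
  rintro ⟨x, -⟩ ⟨s, t, u, hsA, huB, hst, htu, hus, rfl⟩
  refine ⟨H x s, H x t, H x u, ?_, ?_, hmono x hst, hmono x htu,
    hper x s ▸ hmono x hus, ?_⟩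
  · simpa only [hf] using hA hsA
  · simpa only [hf] using hB huB
  · rw [hf]

end FiberwiseArc

section Bands

variable {X : Type*} {δ : ℝ} {A B : Set (X × AddCircle (2 : ℝ))}

lemma prod_Ioo_subset_fiberwiseArc
    (hA : A ⊆ univ ×ˢ (((↑) : ℝ → AddCircle (2 : ℝ)) '' Icc (1 - δ) 1))
    (hB : B ⊆ univ ×ˢ (((↑) : ℝ → AddCircle (2 : ℝ)) '' Icc (-δ) 0))
    (hAfib : ∀ x : X, ∃ a, (x, a) ∈ A) (hBfib : ∀ x : X, ∃ b, (x, b) ∈ B) :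
    univ ×ˢ (((↑) : ℝ → AddCircle (2 : ℝ)) '' Ioo (-1) (-δ)) ⊆ fiberwiseArc A B := by
  rintro ⟨x, -⟩ ⟨-, t, ht, rfl⟩
  obtain ⟨a, ha⟩ := hAfib x
  obtain ⟨b, hb⟩ := hBfib x
  obtain ⟨-, s, hs, rfl⟩ := hA ha
  obtain ⟨-, u, hu, rfl⟩ := hB hb
  refine ⟨s, t + 2, u + 2, ha, ?_, ?_, ?_, ?_, (AddCircle.coe_add_period 2 t).symm⟩
  · rwa [AddCircle.coe_add_period]
  all_goals linarith [hs.1, hs.2, ht.1, ht.2, hu.1, hu.2]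

lemma disjoint_fiberwiseArc_prod_Ioo
    (hA : A ⊆ univ ×ˢ (((↑) : ℝ → AddCircle (2 : ℝ)) '' Icc (1 - δ) 1))
    (hB : B ⊆ univ ×ˢ (((↑) : ℝ → AddCircle (2 : ℝ)) '' Icc (-δ) 0)) :
    Disjoint (fiberwiseArc A B) (univ ×ˢ (((↑) : ℝ → AddCircle (2 : ℝ)) '' Ioo 0 (1 - δ))) := by
  rw [Set.disjoint_left]
  rintro ⟨x, -⟩ ⟨s, t, u, hsA, huB, hst, htu, hus, rfl⟩ ⟨-, t₀, ht₀, ht₀t⟩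
  obtain ⟨-, s₀, hs₀, hs₀s⟩ := hA hsA
  obtain ⟨-, u₀, hu₀, hu₀u⟩ := hB huB
  obtain ⟨k, rfl⟩ := AddCircle.exists_int_eq_add_mul_of_coe_eq hs₀s
  obtain ⟨j, rfl⟩ := AddCircle.exists_int_eq_add_mul_of_coe_eq ht₀t
  obtain ⟨m, rfl⟩ := AddCircle.exists_int_eq_add_mul_of_coe_eq hu₀u
  have hkj : k < j := by
    have : (k : ℝ) < j := by linarith [hs₀.1, ht₀.2]
    exact_mod_cast this
  have hjm : j < m := by
    have : (j : ℝ) < m := by linarith [hu₀.2, ht₀.1]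
    exact_mod_cast this
  have hmk : m < k + 2 := by
    have : (m : ℝ) < k + 2 := by linarith [hs₀.2, hu₀.1, ht₀.1, ht₀.2]
    exact_mod_cast this
  omega

end Bands

theorem stmt10_general {X : Type*} [TopologicalSpace X] [Nonempty X]
    (g : X → X)
    (H : X → ℝ → ℝ) (hmono : ∀ x, StrictMono (H x))
    (hper : ∀ x, ∀ t : ℝ, H x (t + 2) = H x t + 2)
    (h : X → AddCircle (2 : ℝ) → AddCircle (2 : ℝ))
    (hh : ∀ x, ∀ t : ℝ, h x ((t : ℝ) : AddCircle (2 : ℝ)) = ((H x t : ℝ) : AddCircle (2 : ℝ)))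
    (f : X × AddCircle (2 : ℝ) → X × AddCircle (2 : ℝ))
    (hf : ∀ p : X × AddCircle (2 : ℝ), f p = (g p.1, h p.1 p.2))
    (δ : ℝ) (hδ : 0 < δ ∧ δ < 1 / 2)
    (Λ₀ Λ₁ : Set (X × AddCircle (2 : ℝ)))
    (hΛ₀sub : Λ₀ ⊆ (Set.univ : Set X) ×ˢ
      ((fun t : ℝ => ((t : ℝ) : AddCircle (2 : ℝ))) '' Set.Icc (-δ) 0))
    (hΛ₁sub : Λ₁ ⊆ (Set.univ : Set X) ×ˢ
      ((fun t : ℝ => ((t : ℝ) : AddCircle (2 : ℝ))) '' Set.Icc (1 - δ) 1))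
    (hΛ₀inv : f '' Λ₀ = Λ₀) (hΛ₁inv : f '' Λ₁ = Λ₁)
    (hΛ₀fib : ∀ x : X, ∃ a : AddCircle (2 : ℝ), (x, a) ∈ Λ₀)
    (hΛ₁fib : ∀ x : X, ∃ a : AddCircle (2 : ℝ), (x, a) ∈ Λ₁) :
    (∀ n : ℕ, f^[n] '' ((Set.univ : Set X) ×ˢ
        ((fun t : ℝ => ((t : ℝ) : AddCircle (2 : ℝ))) '' Set.Ioo (-1) (-δ))) ∩
      ((Set.univ : Set X) ×ˢ
        ((fun t : ℝ => ((t : ℝ) : AddCircle (2 : ℝ))) '' Set.Ioo 0 (1 - δ))) = ∅) ∧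
    ¬ (∀ U V : Set (X × AddCircle (2 : ℝ)), IsOpen U → IsOpen V →
        U.Nonempty → V.Nonempty → ∃ n > 0, (f^[n] '' U ∩ V).Nonempty) := by
  have hlift : ∀ x (t : ℝ), f (x, (t : AddCircle (2 : ℝ))) = (g x, (H x t : AddCircle (2 : ℝ))) :=
    fun x t => by rw [hf, hh]
  have hArc := mapsTo_fiberwiseArc hlift hmono hper
    (mapsTo_iff_image_subset.2 hΛ₁inv.subset) (mapsTo_iff_image_subset.2 hΛ₀inv.subset)
  have hdisj : ∀ n : ℕ, f^[n] '' (univ ×ˢ (((↑) : ℝ → AddCircle (2 : ℝ)) '' Ioo (-1) (-δ))) ∩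
      univ ×ˢ (((↑) : ℝ → AddCircle (2 : ℝ)) '' Ioo 0 (1 - δ)) = ∅ := fun n =>
    disjoint_iff_inter_eq_empty.1 <| (disjoint_fiberwiseArc_prod_Ioo hΛ₁sub hΛ₀sub).mono_left <|
      (image_mono (prod_Ioo_subset_fiberwiseArc hΛ₁sub hΛ₀sub hΛ₁fib hΛ₀fib)).trans
        (hArc.iterate n).image_subset
  refine ⟨hdisj, fun htrans => ?_⟩
  have hopen : ∀ a b : ℝ, IsOpen ((univ : Set X) ×ˢ (((↑) : ℝ → AddCircle (2 : ℝ)) '' Ioo a b)) :=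
    fun a b => isOpen_univ.prod (QuotientAddGroup.isOpenMap_coe _ isOpen_Ioo)
  have hne : ∀ a b : ℝ, a < b →
      ((univ : Set X) ×ˢ (((↑) : ℝ → AddCircle (2 : ℝ)) '' Ioo a b)).Nonempty :=
    fun a b hab => univ_nonempty.prod ((nonempty_Ioo.2 hab).image _)
  obtain ⟨n, -, hn⟩ := htrans _ _ (hopen _ _) (hopen _ _)
    (hne (-1) (-δ) (by linarith [hδ.2])) (hne 0 (1 - δ) (by linarith [hδ.2]))
  exact hn.ne_empty (hdisj n)

/-- Let `X` be a nonempty topological space, `g : X → X` a bijection,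
and for each `x` let `H x : ℝ → ℝ` be a continuous strictly increasing lift with
`H x (t + 2) = H x t + 2`, inducing a circle homeomorphism `h x` of `ℝ/2ℤ`; let
`f (x, a) = (g x, h x a)`. Fix `0 < δ < 1/2` and suppose `Λ₀ ⊆ X × π [-δ, 0]` and
`Λ₁ ⊆ X × π [1-δ, 1]` are closed `f`-invariant sets meeting every fiber. Then with
`U = X × π (-1, -δ)` and `V = X × π (0, 1-δ)` one has `f^[n] '' U ∩ V = ∅` for all
`n ≥ 0`; in particular `f` is not transitive. -/
theorem stmt10 {X : Type*} [TopologicalSpace X] [Nonempty X]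
    (g : X → X) (hg : Function.Bijective g)
    (H : X → ℝ → ℝ) (hcont : ∀ x, Continuous (H x)) (hmono : ∀ x, StrictMono (H x))
    (hper : ∀ x, ∀ t : ℝ, H x (t + 2) = H x t + 2)
    (h : X → AddCircle (2 : ℝ) → AddCircle (2 : ℝ))
    (hh : ∀ x, ∀ t : ℝ, h x ((t : ℝ) : AddCircle (2 : ℝ)) = ((H x t : ℝ) : AddCircle (2 : ℝ)))
    (f : X × AddCircle (2 : ℝ) → X × AddCircle (2 : ℝ))
    (hf : ∀ p : X × AddCircle (2 : ℝ), f p = (g p.1, h p.1 p.2))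
    (δ : ℝ) (hδ : 0 < δ ∧ δ < 1 / 2)
    (Λ₀ Λ₁ : Set (X × AddCircle (2 : ℝ)))
    (hΛ₀sub : Λ₀ ⊆ (Set.univ : Set X) ×ˢ
      ((fun t : ℝ => ((t : ℝ) : AddCircle (2 : ℝ))) '' Set.Icc (-δ) 0))
    (hΛ₁sub : Λ₁ ⊆ (Set.univ : Set X) ×ˢ
      ((fun t : ℝ => ((t : ℝ) : AddCircle (2 : ℝ))) '' Set.Icc (1 - δ) 1))
    (hΛ₀cl : IsClosed Λ₀) (hΛ₁cl : IsClosed Λ₁)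
    (hΛ₀inv : f '' Λ₀ = Λ₀) (hΛ₁inv : f '' Λ₁ = Λ₁)
    (hΛ₀fib : ∀ x : X, ∃ a : AddCircle (2 : ℝ), (x, a) ∈ Λ₀)
    (hΛ₁fib : ∀ x : X, ∃ a : AddCircle (2 : ℝ), (x, a) ∈ Λ₁) :
    (∀ n : ℕ, f^[n] '' ((Set.univ : Set X) ×ˢ
        ((fun t : ℝ => ((t : ℝ) : AddCircle (2 : ℝ))) '' Set.Ioo (-1) (-δ))) ∩
      ((Set.univ : Set X) ×ˢ
        ((fun t : ℝ => ((t : ℝ) : AddCircle (2 : ℝ))) '' Set.Ioo 0 (1 - δ))) = ∅) ∧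
    ¬ (∀ U V : Set (X × AddCircle (2 : ℝ)), IsOpen U → IsOpen V →
        U.Nonempty → V.Nonempty → ∃ n > 0, (f^[n] '' U ∩ V).Nonempty) :=
  stmt10_general g H hmono hper h hh f hf δ hδ Λ₀ Λ₁ hΛ₀sub hΛ₁sub hΛ₀inv hΛ₁inv hΛ₀fib hΛ₁fib
end

section
/- Let A : (ℝ/ℤ)² → (ℝ/ℤ)² be the automorphism of the 2-torus induced by the linear map (m, n) ↦ (2m + n, m + n), and let G : ℝ → ℝ be continuous, strictly increasing, with G(x+2) = G(x)+2 for all x, G(x) ≥ x for all x, and G(x) = x if and only if x ∈ ℤ, inducing the circle map g on ℝ/2ℤ. Then the product homeomorphism F : (ℝ/ℤ)² × (ℝ/2ℤ) → (ℝ/ℤ)² × (ℝ/2ℤ), F(x, a) = (A(x), g(a)), is chain transitive: for every ε > 0 and every pair of points P, Q in (ℝ/ℤ)² × (ℝ/2ℤ) there is an ε-chain from P to Q. -/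
/-!
Both factors have a fixed point through which every point can be ε-chained in both directions,
and padding such chains at the fixed points gives chains of every large length in each factor,
hence chains of a common length in the product.

For the cat map `A` the fixed point is `0`: its stable and unstable lines, of irrational slopes
`-φ` and `-ψ`, are dense, so one jumps from `A a` onto the stable line, follows it into `0`, and
leaves `0` along the unstable line to land next to `b`. For `g` everything happens in the lift:
the forward orbit of `α` increases to the fixed point `⌈α⌉`, the backward orbit of `β` decreases
to `⌊β⌋`, and `k + 1/2` links consecutive integers `k` and `k + 1`. As `G` moves points up, the
target is first shifted above the source by a multiple of the period.
-/

open Filter Topology Function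

def EpsChain {X : Type*} [PseudoMetricSpace X] (f : X → X) (ε : ℝ) (n : ℕ) (a b : X) : Prop :=
  ∃ c : ℕ → X, c 0 = a ∧ c n = b ∧ ∀ i < n, dist (f (c i)) (c (i + 1)) < ε

namespace EpsChain

variable {X Y : Type*} [PseudoMetricSpace X] [PseudoMetricSpace Y] {f : X → X} {ε : ℝ}
  {n m : ℕ} {a b d : X}

theorem single (h : dist (f a) b < ε) : EpsChain f ε 1 a b :=
  ⟨fun i => if i = 0 then a else b, rfl, rfl, fun i hi => by
    obtain rfl : i = 0 := by omega
    simpa using h⟩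

theorem iterate (hε : 0 < ε) (x : X) (n : ℕ) : EpsChain f ε n x (f^[n] x) :=
  ⟨fun i => f^[i] x, rfl, rfl, fun i _ => by simpa [← iterate_succ_apply'] using hε⟩

theorem of_isFixedPt {p : X} (hp : IsFixedPt f p) (hε : 0 < ε) (n : ℕ) : EpsChain f ε n p p := by
  simpa [(hp.iterate n).eq] using iterate (f := f) hε p n

theorem trans (h₁ : EpsChain f ε n a b) (h₂ : EpsChain f ε m b d) :
    EpsChain f ε (n + m) a d := by
  obtain ⟨c, rfl, rfl, hc⟩ := h₁
  obtain ⟨e, he0, rfl, he⟩ := h₂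
  refine ⟨fun i => if i ≤ n then c i else e (i - n), by simp, ?_, fun i hi => ?_⟩
  · rcases m.eq_zero_or_pos with rfl | hm
    · simp [he0]
    · simp [show ¬ n + m ≤ n by omega]
  · rcases lt_trichotomy i n with hin | rfl | hin
    · simpa [hin.le, Nat.succ_le_of_lt hin] using hc i hin
    · simpa [← he0] using he 0 (by omega)
    · simpa [show ¬ i ≤ n by omega, show ¬ i + 1 ≤ n by omega, show i + 1 - n = i - n + 1 by omega]
        using he (i - n) (by omega)

theorem prodMap {g : Y → Y} {a' b' : Y} (h₁ : EpsChain f ε n a b) (h₂ : EpsChain g ε n a' b') :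
    EpsChain (Prod.map f g) ε n (a, a') (b, b') := by
  obtain ⟨c, rfl, rfl, hc⟩ := h₁
  obtain ⟨e, rfl, rfl, he⟩ := h₂
  exact ⟨fun i => (c i, e i), rfl, rfl, fun i hi => by
    simpa [Prod.dist_eq] using ⟨hc i hi, he i hi⟩⟩

theorem map {g : Y → Y} {π : X → Y} (hπ : ∀ x y, dist (π x) (π y) ≤ dist x y)
    (hfg : Semiconj π f g) (h : EpsChain f ε n a b) : EpsChain g ε n (π a) (π b) := by
  obtain ⟨c, rfl, rfl, hc⟩ := h
  exact ⟨π ∘ c, rfl, rfl, fun i hi => by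
    simpa [← hfg.eq] using (hπ _ _).trans_lt (hc i hi)⟩

end EpsChain

section ChainTransitive

variable {X Y : Type*} [MetricSpace X] [MetricSpace Y] {f : X → X} {ε : ℝ}

theorem chainTransitive_of_epsChain_through_fixedPt {p : X} (hp : IsFixedPt f p)
    (hto : ∀ ε > 0, ∀ a, ∃ n, EpsChain f ε n a p)
    (hfrom : ∀ ε > 0, ∀ b, ∃ n, EpsChain f ε n p b) :
    ChainTransitive f := by
  intro ε hε a b
  obtain ⟨n, ha⟩ := hto ε hε a
  obtain ⟨m, hb⟩ := hfrom ε hε b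
  exact ⟨n + 1 + m, by omega, (ha.trans (.of_isFixedPt hp hε 1)).trans hb⟩

theorem ChainTransitive.eventually_epsChain (hf : ChainTransitive f) {p : X} (hp : IsFixedPt f p)
    (hε : 0 < ε) (a b : X) : ∀ᶠ N in atTop, EpsChain f ε N a b := by
  obtain ⟨n, -, ha⟩ : ∃ n ≥ 1, EpsChain f ε n a p := hf ε hε a p
  obtain ⟨m, -, hb⟩ : ∃ m ≥ 1, EpsChain f ε m p b := hf ε hε p b
  filter_upwards [eventually_ge_atTop (n + m)] with N hN
  obtain ⟨k, rfl⟩ := Nat.exists_eq_add_of_le hN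
  simpa only [Nat.add_right_comm n m k] using (ha.trans (.of_isFixedPt hp hε k)).trans hb

theorem ChainTransitive.prodMap {g : Y → Y} (hf : ChainTransitive f) (hg : ChainTransitive g)
    {p : X} {q : Y} (hp : IsFixedPt f p) (hq : IsFixedPt g q) : ChainTransitive (Prod.map f g) := by
  intro ε hε a b
  obtain ⟨N, hN, hfN, hgN⟩ := ((eventually_ge_atTop 1).and
    ((hf.eventually_epsChain hp hε a.1 b.1).and (hg.eventually_epsChain hq hε a.2 b.2))).exists
  exact ⟨N, hN, hfN.prodMap hgN⟩

end ChainTransitive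

section StableSets

variable {X : Type*} [PseudoMetricSpace X] {f : X → X} {ε : ℝ} {p : X}

theorem exists_epsChain_of_tendsto_iterate {x : X} (hx : Tendsto (fun n => f^[n] x) atTop (𝓝 p))
    (hε : 0 < ε) : ∃ n, EpsChain f ε n x p := by
  obtain ⟨n, hn⟩ := ((tendsto_add_atTop_iff_nat 1).2 hx |>.eventually
    (Metric.ball_mem_nhds p hε)).exists
  refine ⟨n + 1, (EpsChain.iterate hε x n).trans (.single ?_)⟩
  rwa [← iterate_succ_apply' f n x]

theorem exists_epsChain_of_tendsto_preimages (hp : IsFixedPt f p) {y : ℕ → X} {z : X}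
    (hy : Tendsto y atTop (𝓝 p)) (hyz : ∀ n, f^[n] (y n) = z) (hε : 0 < ε) :
    ∃ n, EpsChain f ε n p z := by
  obtain ⟨n, hn⟩ := (hy.eventually (Metric.ball_mem_nhds p hε)).exists
  refine ⟨1 + n, hyz n ▸ (EpsChain.single ?_).trans (.iterate hε _ n)⟩
  rwa [hp.eq, dist_comm]

end StableSets

section Eigenlines

variable {X : Type*} {f : X → X} {γ : ℝ → X} {μ : ℝ}

theorem iterate_map_eq_mul (h : ∀ t, f (γ t) = γ (μ * t)) (n : ℕ) (t : ℝ) :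
    f^[n] (γ t) = γ (μ ^ n * t) := by
  induction n with
  | zero => simp
  | succ n ih => rw [iterate_succ_apply', ih, h, pow_succ', mul_assoc]

variable [PseudoMetricSpace X] {ε : ℝ}

theorem exists_epsChain_to_of_map_eq_mul (hγ : Continuous γ) (h : ∀ t, f (γ t) = γ (μ * t))
    (hμ : |μ| < 1) (hε : 0 < ε) (t : ℝ) : ∃ n, EpsChain f ε n (γ t) (γ 0) := by
  refine exists_epsChain_of_tendsto_iterate ?_ hε
  simp_rw [iterate_map_eq_mul h]
  refine (hγ.tendsto 0).comp ?_
  simpa using (tendsto_pow_atTop_nhds_zero_of_abs_lt_one hμ).mul_const t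

theorem exists_epsChain_from_of_map_eq_mul (hγ : Continuous γ) (h : ∀ t, f (γ t) = γ (μ * t))
    (hμ : 1 < |μ|) (hε : 0 < ε) (t : ℝ) : ∃ n, EpsChain f ε n (γ 0) (γ t) := by
  have hμ₀ : μ ≠ 0 := abs_pos.1 (one_pos.trans hμ)
  refine exists_epsChain_of_tendsto_preimages (y := fun n => γ (μ⁻¹ ^ n * t))
    (by simpa [IsFixedPt] using h 0) ((hγ.tendsto 0).comp ?_) (fun n => ?_) hε
  · have hμ' : |μ⁻¹| < 1 := by rw [abs_inv]; exact inv_lt_one_of_one_lt₀ hμ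
    simpa using (tendsto_pow_atTop_nhds_zero_of_abs_lt_one hμ').mul_const t
  · rw [iterate_map_eq_mul h, inv_pow, mul_inv_cancel_left₀ (pow_ne_zero n hμ₀)]

end Eigenlines

theorem chainTransitive_of_denseRange_eigenlines {X : Type*} [MetricSpace X] {f : X → X}
    {γs γu : ℝ → X} {μ ν : ℝ} (hγs : Continuous γs) (hγu : Continuous γu)
    (hds : DenseRange γs) (hdu : DenseRange γu) (h0 : γs 0 = γu 0)
    (hs : ∀ t, f (γs t) = γs (μ * t)) (hu : ∀ t, f (γu t) = γu (ν * t))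
    (hμ : |μ| < 1) (hν : 1 < |ν|) : ChainTransitive f := by
  have hν₀ : ν ≠ 0 := abs_pos.1 (one_pos.trans hν)
  refine chainTransitive_of_epsChain_through_fixedPt (p := γs 0) (by simpa [IsFixedPt] using hs 0)
    (fun ε hε a => ?_) (fun ε hε b => ?_)
  · obtain ⟨t, ht⟩ := Metric.denseRange_iff.1 hds (f a) ε hε
    obtain ⟨n, hn⟩ := exists_epsChain_to_of_map_eq_mul hγs hs hμ hε t
    exact ⟨1 + n, (EpsChain.single ht).trans hn⟩
  · obtain ⟨t, ht⟩ := Metric.denseRange_iff.1 hdu b ε hε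
    obtain ⟨n, hn⟩ := exists_epsChain_from_of_map_eq_mul hγu hu hν hε (ν⁻¹ * t)
    refine ⟨n + 1, h0 ▸ hn.trans (.single ?_)⟩
    rwa [hu, mul_inv_cancel_left₀ hν₀, dist_comm]

def torusLine (c t : ℝ) : AddCircle (1 : ℝ) × AddCircle (1 : ℝ) :=
  ((t : AddCircle (1 : ℝ)), ((c * t : ℝ) : AddCircle (1 : ℝ)))

theorem continuous_torusLine (c : ℝ) : Continuous (torusLine c) := by
  unfold torusLine; fun_prop

theorem torusLine_zero (c : ℝ) : torusLine c 0 = 0 := by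
  simp [torusLine]

theorem denseRange_torusLine {c : ℝ} (hc : Irrational c) : DenseRange (torusLine c) := by
  have hmul : DenseRange (· • (c : AddCircle (1 : ℝ)) : ℤ → AddCircle (1 : ℝ)) :=
    AddCircle.denseRange_zsmul_coe_iff.2 (by simpa using hc)
  refine Metric.denseRange_iff.2 fun ⟨x, y⟩ r hr => ?_
  induction x using QuotientAddGroup.induction_on with | H u => ?_
  induction y using QuotientAddGroup.induction_on with | H v => ?_
  obtain ⟨k, hk⟩ := Metric.denseRange_iff.1 hmul ((v - c * u : ℝ) : AddCircle (1 : ℝ)) r hr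
  refine ⟨u + k, ?_⟩
  have hv : ((v : ℝ) : AddCircle (1 : ℝ)) =
      ((c * u : ℝ) : AddCircle (1 : ℝ)) + ((v - c * u : ℝ) : AddCircle (1 : ℝ)) := by
    rw [← AddCircle.coe_add, add_sub_cancel]
  have hk0 : ((k : ℝ) : AddCircle (1 : ℝ)) = 0 := by
    rw [← mul_one (k : ℝ), ← zsmul_eq_mul, AddCircle.coe_zsmul, AddCircle.coe_period, smul_zero]
  have hline : torusLine c (u + k) =
      ((u : AddCircle (1 : ℝ)),
        ((c * u : ℝ) : AddCircle (1 : ℝ)) + k • (c : AddCircle (1 : ℝ))) := by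
    rw [torusLine, mul_add, AddCircle.coe_add, AddCircle.coe_add, hk0, add_zero,
      mul_comm c (k : ℝ), ← zsmul_eq_mul, AddCircle.coe_zsmul]
  rw [hline, Prod.dist_eq, dist_self, hv, dist_add_left]
  simpa using hk

open Real goldenRatio in
theorem chainTransitive_catMap
    {A : AddCircle (1 : ℝ) × AddCircle (1 : ℝ) → AddCircle (1 : ℝ) × AddCircle (1 : ℝ)}
    (hA : ∀ m n : ℝ, A ((m : AddCircle (1 : ℝ)), (n : AddCircle (1 : ℝ))) =
      (((2 * m + n : ℝ) : AddCircle (1 : ℝ)), ((m + n : ℝ) : AddCircle (1 : ℝ)))) :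
    ChainTransitive A := by
  have map_torusLine {c : ℝ} (hc : c ^ 2 + c = 1) (t : ℝ) :
      A (torusLine c t) = torusLine c ((2 + c) * t) := by
    rw [torusLine, hA, torusLine, show c * ((2 + c) * t) = t + c * t by linear_combination t * hc,
      add_mul]
  refine chainTransitive_of_denseRange_eigenlines (continuous_torusLine _)
    (continuous_torusLine _) (denseRange_torusLine goldenRatio_irrational.neg)
    (denseRange_torusLine goldenConj_irrational.neg) (by simp only [torusLine_zero])
    (map_torusLine (by linear_combination goldenRatio_sq))
    (map_torusLine (by linear_combination goldenConj_sq)) ?_ ?_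
  · rw [abs_lt]
    constructor <;> linarith [one_lt_goldenRatio, goldenRatio_lt_two]
  · exact lt_abs.2 (Or.inl (by linarith [goldenConj_neg]))

section CircleLift

variable {G : ℝ → ℝ} (hcont : Continuous G) (hmono : StrictMono G) (hge : ∀ x, x ≤ G x)
  (hfix : ∀ x : ℝ, G x = x ↔ ∃ k : ℤ, x = k)
include hcont hmono hge hfix

theorem surjective_of_fixedPoints_eq_int : Surjective G := by
  refine hcont.surjective (tendsto_atTop_mono hge tendsto_id)
    (tendsto_atBot_mono (fun x => ?_) (tendsto_atBot_add_const_right _ 1 tendsto_id))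
  calc G x ≤ G ⌈x⌉ := hmono.monotone (Int.le_ceil x)
    _ = ⌈x⌉ := (hfix _).2 ⟨_, rfl⟩
    _ ≤ x + 1 := (Int.ceil_lt_add_one x).le

theorem tendsto_iterate_ceil (α : ℝ) : Tendsto (fun n => G^[n] α) atTop (𝓝 ⌈α⌉) := by
  have hceil : IsFixedPt G ⌈α⌉ := (hfix _).2 ⟨_, rfl⟩
  have hbdd (n : ℕ) : G^[n] α ≤ ⌈α⌉ :=
    (hceil.iterate n).eq ▸ hmono.monotone.iterate n (Int.le_ceil α)
  have hup : Monotone fun n => G^[n] α :=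
    monotone_nat_of_le_succ fun n => by rw [iterate_succ_apply']; exact hge _
  have hL := tendsto_atTop_ciSup hup ⟨_, Set.forall_mem_range.2 hbdd⟩
  obtain ⟨k, hk⟩ := (hfix _).1 (isFixedPt_of_tendsto_iterate hL hcont.continuousAt)
  suffices k = ⌈α⌉ by rwa [hk, this] at hL
  refine le_antisymm (by exact_mod_cast hk ▸ ciSup_le hbdd) (Int.ceil_le.2 ?_)
  exact hk ▸ le_ciSup_of_le ⟨_, Set.forall_mem_range.2 hbdd⟩ 0 le_rfl

theorem exists_preimages_tendsto_floor (β : ℝ) :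
    ∃ y : ℕ → ℝ, Tendsto y atTop (𝓝 ⌊β⌋) ∧ ∀ n, G^[n] (y n) = β := by
  have hsurj := surjective_of_fixedPoints_eq_int hcont hmono hge hfix
  set y : ℕ → ℝ := fun n => (surjInv hsurj)^[n] β
  have hy (n : ℕ) : G (y (n + 1)) = y n := by simp only [y, iterate_succ_apply', surjInv_eq]
  have hfloor : G ⌊β⌋ = ⌊β⌋ := (hfix _).2 ⟨_, rfl⟩
  have hbdd (n : ℕ) : (⌊β⌋ : ℝ) ≤ y n := by
    induction n with
    | zero => exact Int.floor_le β
    | succ n ih => rwa [← hmono.le_iff_le, hy, hfloor]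
  have hdown : Antitone y := antitone_nat_of_succ_le fun n => (hge _).trans_eq (hy n)
  have hL := tendsto_atTop_ciInf hdown ⟨_, Set.forall_mem_range.2 hbdd⟩
  have hfixL : G (⨅ n, y n) = ⨅ n, y n := tendsto_nhds_unique
    ((hcont.tendsto _).comp ((tendsto_add_atTop_iff_nat 1).2 hL))
    (by simpa [Function.comp_def, hy] using hL)
  obtain ⟨k, hk⟩ := (hfix _).1 hfixL
  refine ⟨y, ?_, fun n => ((rightInverse_surjInv hsurj).iterate n) β⟩
  suffices k = ⌊β⌋ by rwa [hk, this] at hL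
  refine le_antisymm (Int.le_floor.2 (hk ▸ ciInf_le ⟨_, Set.forall_mem_range.2 hbdd⟩ 0)) ?_
  exact_mod_cast hk ▸ le_ciInf hbdd

theorem exists_epsChain_ceil {ε : ℝ} (hε : 0 < ε) (α : ℝ) : ∃ n, EpsChain G ε n α ⌈α⌉ :=
  exists_epsChain_of_tendsto_iterate (tendsto_iterate_ceil hcont hmono hge hfix α) hε

theorem exists_epsChain_floor {ε : ℝ} (hε : 0 < ε) (β : ℝ) : ∃ n, EpsChain G ε n ⌊β⌋ β := by
  obtain ⟨y, hy, hyβ⟩ := exists_preimages_tendsto_floor hcont hmono hge hfix β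
  exact exists_epsChain_of_tendsto_preimages ((hfix _).2 ⟨_, rfl⟩) hy hyβ hε

theorem exists_epsChain_intCast {ε : ℝ} (hε : 0 < ε) {m m' : ℤ} (h : m ≤ m') :
    ∃ n, EpsChain G ε n m m' := by
  induction m', h using Int.leInduction with
  | base => exact ⟨0, .of_isFixedPt ((hfix _).2 ⟨_, rfl⟩) hε 0⟩
  | succ k _ ih =>
    obtain ⟨n, hn⟩ := ih
    obtain ⟨n₁, h₁⟩ := exists_epsChain_floor hcont hmono hge hfix hε (k + 1 / 2)
    obtain ⟨n₂, h₂⟩ := exists_epsChain_ceil hcont hmono hge hfix hε (k + 1 / 2)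
    have hfloor : ⌊(k : ℝ) + 1 / 2⌋ = k := by rw [Int.floor_eq_iff]; constructor <;> linarith
    have hceil : ⌈(k : ℝ) + 1 / 2⌉ = k + 1 := by
      rw [Int.ceil_eq_iff]; push_cast; constructor <;> linarith
    rw [hfloor] at h₁
    rw [hceil] at h₂
    exact ⟨_, (hn.trans h₁).trans h₂⟩

theorem exists_epsChain_of_add_one_le {ε : ℝ} (hε : 0 < ε) {α β : ℝ} (h : α + 1 ≤ β) :
    ∃ n, EpsChain G ε n α β := by
  obtain ⟨n₁, h₁⟩ := exists_epsChain_ceil hcont hmono hge hfix hε α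
  obtain ⟨n₂, h₂⟩ := exists_epsChain_intCast hcont hmono hge hfix hε
    (Int.le_floor.2 ((Int.ceil_lt_add_one α).le.trans h))
  obtain ⟨n₃, h₃⟩ := exists_epsChain_floor hcont hmono hge hfix hε β
  exact ⟨_, (h₁.trans h₂).trans h₃⟩

end CircleLift

theorem AddCircle.dist_coe_le (p x y : ℝ) :
    dist (x : AddCircle p) (y : AddCircle p) ≤ dist x y := by
  rw [dist_eq_norm, dist_eq_norm, ← AddCircle.coe_sub]
  exact QuotientAddGroup.norm_mk_le_norm

theorem isFixedPt_zero_of_lift {G : ℝ → ℝ} (hfix : ∀ x : ℝ, G x = x ↔ ∃ k : ℤ, x = k) {p : ℝ}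
    {g : AddCircle p → AddCircle p} (hg : ∀ x : ℝ, g x = G x) : IsFixedPt g 0 := by
  simpa [IsFixedPt, (hfix 0).2 ⟨0, by simp⟩] using hg 0

theorem chainTransitive_of_lift {G : ℝ → ℝ} (hcont : Continuous G) (hmono : StrictMono G)
    (hge : ∀ x, x ≤ G x) (hfix : ∀ x : ℝ, G x = x ↔ ∃ k : ℤ, x = k) {p : ℝ} (hp : 0 < p)
    {g : AddCircle p → AddCircle p} (hg : ∀ x : ℝ, g x = G x) : ChainTransitive g := by
  have hchain (ε : ℝ) (hε : 0 < ε) (α β : ℝ) : ∃ n, EpsChain g ε n α β := by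
    obtain ⟨k, hk⟩ := exists_nat_ge ((α + 1 - β) / p)
    obtain ⟨n, hn⟩ := exists_epsChain_of_add_one_le hcont hmono hge hfix hε
      (α := α) (β := β + k • p) (by rw [nsmul_eq_mul]; linarith [(div_le_iff₀ hp).1 hk])
    refine ⟨n, ?_⟩
    simpa [AddCircle.coe_add, AddCircle.coe_nsmul, AddCircle.coe_period] using
      hn.map (AddCircle.dist_coe_le p) (fun x => (hg x).symm)
  refine chainTransitive_of_epsChain_through_fixedPt (isFixedPt_zero_of_lift hfix hg)
    (fun ε hε a => ?_) (fun ε hε b => ?_)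
  · induction a using QuotientAddGroup.induction_on with | H α => simpa using hchain ε hε α 0
  · induction b using QuotientAddGroup.induction_on with | H β => simpa using hchain ε hε 0 β

theorem stmt13_general
    (A : AddCircle (1 : ℝ) × AddCircle (1 : ℝ) → AddCircle (1 : ℝ) × AddCircle (1 : ℝ))
    (hA : ∀ m n : ℝ, A (((m : ℝ) : AddCircle (1 : ℝ)), ((n : ℝ) : AddCircle (1 : ℝ))) =
      (((2 * m + n : ℝ) : AddCircle (1 : ℝ)), ((m + n : ℝ) : AddCircle (1 : ℝ))))
    (G : ℝ → ℝ) (hcont : Continuous G) (hmono : StrictMono G)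
    (hge : ∀ x : ℝ, x ≤ G x)
    (hfix : ∀ x : ℝ, G x = x ↔ ∃ k : ℤ, x = (k : ℝ))
    (g : AddCircle (2 : ℝ) → AddCircle (2 : ℝ))
    (hg : ∀ x : ℝ, g ((x : ℝ) : AddCircle (2 : ℝ)) = ((G x : ℝ) : AddCircle (2 : ℝ)))
    (F : (AddCircle (1 : ℝ) × AddCircle (1 : ℝ)) × AddCircle (2 : ℝ) →
      (AddCircle (1 : ℝ) × AddCircle (1 : ℝ)) × AddCircle (2 : ℝ))
    (hF : ∀ p, F p = (A p.1, g p.2)) :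
    ChainTransitive F := by
  obtain rfl : F = Prod.map A g := funext hF
  have hA0 : IsFixedPt A 0 := by simpa [IsFixedPt, Prod.mk_zero_zero] using hA 0 0
  exact (chainTransitive_catMap hA).prodMap
    (chainTransitive_of_lift hcont hmono hge hfix two_pos hg) hA0 (isFixedPt_zero_of_lift hfix hg)

/-- Let `A` be the toral automorphism induced by
`(m, n) ↦ (2m + n, m + n)`, let `G : ℝ → ℝ` be a continuous strictly increasing
lift with `G (x + 2) = G x + 2`, `G x ≥ x`, `G x = x` iff `x ∈ ℤ`, inducing the
circle map `g` on `ℝ/2ℤ`. Then the product map `F (x, a) = (A x, g a)` on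
`(ℝ/ℤ)² × (ℝ/2ℤ)` is chain transitive. -/
theorem stmt13
    (A : AddCircle (1 : ℝ) × AddCircle (1 : ℝ) → AddCircle (1 : ℝ) × AddCircle (1 : ℝ))
    (hA : ∀ m n : ℝ, A (((m : ℝ) : AddCircle (1 : ℝ)), ((n : ℝ) : AddCircle (1 : ℝ))) =
      (((2 * m + n : ℝ) : AddCircle (1 : ℝ)), ((m + n : ℝ) : AddCircle (1 : ℝ))))
    (G : ℝ → ℝ) (hcont : Continuous G) (hmono : StrictMono G)
    (hper : ∀ x : ℝ, G (x + 2) = G x + 2)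
    (hge : ∀ x : ℝ, x ≤ G x)
    (hfix : ∀ x : ℝ, G x = x ↔ ∃ k : ℤ, x = (k : ℝ))
    (g : AddCircle (2 : ℝ) → AddCircle (2 : ℝ))
    (hg : ∀ x : ℝ, g ((x : ℝ) : AddCircle (2 : ℝ)) = ((G x : ℝ) : AddCircle (2 : ℝ)))
    (F : (AddCircle (1 : ℝ) × AddCircle (1 : ℝ)) × AddCircle (2 : ℝ) →
      (AddCircle (1 : ℝ) × AddCircle (1 : ℝ)) × AddCircle (2 : ℝ))
    (hF : ∀ p, F p = (A p.1, g p.2)) :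
    ChainTransitive F :=
  stmt13_general A hA G hcont hmono hge hfix g hg F hF
end
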